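/- Let a ∈ ℝⁿ be a vector with aᵀa ≤ 1/α for some α > 0, let x ~ Exp(1), and set w̄ = min(e^x, 1/(α·aᵀa)). Then E[w̄²·(a aᵀ)²] ⪯ (2/α)·a aᵀ in the Loewner order. -/

import Mathlib

/-!
Since `vecMulVec a a` squares to `(aᵀa) • vecMulVec a a`, the matrix in question is the rank-one
matrix `(2/α - E[w̄²]·aᵀa) • vecMulVec a a`, so it suffices that `E[w̄²]·aᵀa ≤ 2/α`. Splitting
the integral at `log c`, where `e^t` reaches the cap `c = 1/(α·aᵀa) ≥ 1`, gives
`E[min(e^x, c)²] = (c - 1) + c = 2c - 1`, hence `E[w̄²]·aᵀa = 2/α - aᵀa`.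
-/

open Matrix Real MeasureTheory Set

theorem min_exp_sq_mul_exp_neg_of_exp_le {c t : ℝ} (h : exp t ≤ c) :
    min (exp t) c ^ 2 * exp (-t) = exp t := by
  rw [min_eq_left h, sq, mul_assoc, ← exp_add, add_neg_cancel, exp_zero, mul_one]

theorem min_exp_sq_mul_exp_neg_of_le_exp {c t : ℝ} (h : c ≤ exp t) :
    min (exp t) c ^ 2 * exp (-t) = c ^ 2 * exp (-t) := by
  rw [min_eq_right h]

theorem integral_Ioi_min_exp_sq_mul_exp_neg {c : ℝ} (hc : 1 ≤ c) :
    ∫ t in Ioi (0 : ℝ), min (exp t) c ^ 2 * exp (-t) = 2 * c - 1 := by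
  have hc₀ : 0 < c := zero_lt_one.trans_le hc
  have hL : 0 ≤ log c := log_nonneg hc
  have h_left : EqOn (fun t => min (exp t) c ^ 2 * exp (-t)) exp (Ioc 0 (log c)) :=
    fun t ht => min_exp_sq_mul_exp_neg_of_exp_le <| by
      simpa [exp_log hc₀] using exp_le_exp.2 ht.2
  have h_right : EqOn (fun t => min (exp t) c ^ 2 * exp (-t)) (fun t => c ^ 2 * exp (-t))
      (Ioi (log c)) :=
    fun t ht => min_exp_sq_mul_exp_neg_of_le_exp <| by
      simpa [exp_log hc₀] using exp_le_exp.2 (le_of_lt ht)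
  have int_left : IntegrableOn (fun t => min (exp t) c ^ 2 * exp (-t)) (Ioc 0 (log c)) :=
    continuous_exp.integrableOn_Ioc.congr_fun h_left.symm measurableSet_Ioc
  have int_right : IntegrableOn (fun t => min (exp t) c ^ 2 * exp (-t)) (Ioi (log c)) := by
    have : IntegrableOn (fun t => c ^ 2 * exp (-t)) (Ioi (log c)) := by
      simpa [IntegrableOn] using (exp_neg_integrableOn_Ioi (log c) one_pos).const_mul (c ^ 2)
    exact this.congr_fun h_right.symm measurableSet_Ioi
  rw [← Ioc_union_Ioi_eq_Ioi hL,
    setIntegral_union (Ioc_disjoint_Ioi le_rfl) measurableSet_Ioi int_left int_right,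
    setIntegral_congr_fun measurableSet_Ioc h_left,
    setIntegral_congr_fun measurableSet_Ioi h_right, integral_const_mul, integral_exp_neg_Ioi,
    ← intervalIntegral.integral_of_le hL, integral_exp, Real.exp_neg, exp_log hc₀, exp_zero]
  field_simp
  ring

theorem vecMulVec_self_mul_self {n : Type*} [Fintype n] {R : Type*} [CommSemiring R]
    (a : n → R) : vecMulVec a a * vecMulVec a a = (a ⬝ᵥ a) • vecMulVec a a := by
  rw [vecMulVec_mul_vecMulVec, vecMulVec_smul]

/-- For a with aᵀa ≤ 1/α and x ~ Exp(1), w̄ = min(e^x, 1/(α·aᵀa)),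
    we have E[w̄²·(aaᵀ)²] ⪯ (2/α)·aaᵀ. -/
theorem truncated_weight_second_moment (n : ℕ) (α : ℝ) (hα : 0 < α)
    (a : Fin n → ℝ) (ha : a ⬝ᵥ a ≤ 1 / α) :
    ((2 / α) • Matrix.vecMulVec a a -
      (∫ t in Set.Ioi (0 : ℝ),
          (min (Real.exp t) (1 / (α * (a ⬝ᵥ a)))) ^ 2 * Real.exp (-t)) •
        (Matrix.vecMulVec a a * Matrix.vecMulVec a a)).PosSemidef := by
  rw [vecMulVec_self_mul_self, smul_smul, ← sub_smul]
  have hpsd : (vecMulVec a a).PosSemidef := by simpa using posSemidef_vecMulVec_self_star a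
  have hs₀ : 0 ≤ a ⬝ᵥ a := by simpa using dotProduct_self_star_nonneg a
  refine hpsd.smul ?_
  rcases hs₀.eq_or_lt with hs | hs
  · simp only [← hs, mul_zero, sub_zero]
    positivity
  · have hc : 1 ≤ 1 / (α * (a ⬝ᵥ a)) := by
      rw [le_div_iff₀ (mul_pos hα hs), one_mul]
      exact (le_div_iff₀' hα).1 ha
    rw [integral_Ioi_min_exp_sq_mul_exp_neg hc, sub_nonneg]
    have hexpand : (2 * (1 / (α * (a ⬝ᵥ a))) - 1) * (a ⬝ᵥ a) = 2 / α - a ⬝ᵥ a := by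
      field_simp
    linarith
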